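/- Let φ be a formula of FO(D) where every dependency in D is upwards closed. Let M be a model and X ⊆ Y teams such that M ⊨_X φ and M ⊨_Y φᶠ. Then M ⊨_Y φ. -/

import Mathlib

/-- Formulas of first-order logic with team semantics, in negation normal form,
over a relational signature `σ` (with arities `ar`) extended with dependency
atoms indexed by `δ` (with arities `dar`).  Equality and inequality literals
are between tuples of variables; variables are natural numbers. -/
inductive TForm (σ : Type) (ar : σ → ℕ) (δ : Type) (dar : δ → ℕ) : Type
  | rel (r : σ) (ts : Fin (ar r) → ℕ)
  | nrel (r : σ) (ts : Fin (ar r) → ℕ)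
  | eq (k : ℕ) (x y : Fin k → ℕ)
  | neq (k : ℕ) (x y : Fin k → ℕ)
  | dep (d : δ) (xs : Fin (dar d) → ℕ)
  | and (φ ψ : TForm σ ar δ dar)
  | or (φ ψ : TForm σ ar δ dar)
  | ex (v : ℕ) (φ : TForm σ ar δ dar)
  | all (v : ℕ) (φ : TForm σ ar δ dar)

/-- A team over a model with carrier `M`: a set of assignments. -/
abbrev Team (M : Type) := Set (ℕ → M)

/-- `X(x̄)`: the relation of values of the tuple `x̄` in the team `X`. -/
def Team.rel {M : Type} (X : Team M) {k : ℕ} (xs : Fin k → ℕ) : Set (Fin k → M) :=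
  {t | ∃ s ∈ X, t = fun i => s (xs i)}

/-- An interpretation of a family of dependencies: for each index, an
isomorphism-invariant-style class of pairs (carrier, relation). -/
abbrev DepFam (δ : Type) (dar : δ → ℕ) := ∀ d : δ, ∀ M : Type, Set (Fin (dar d) → M) → Prop

/-- Lax team semantics. -/
def tsat {σ : Type} {ar : σ → ℕ} {δ : Type} {dar : δ → ℕ} {M : Type}
    (RI : ∀ r : σ, Set (Fin (ar r) → M)) (DI : DepFam δ dar) :
    TForm σ ar δ dar → Team M → Prop
  | .rel r ts, X => ∀ s ∈ X, (fun i => s (ts i)) ∈ RI r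
  | .nrel r ts, X => ∀ s ∈ X, (fun i => s (ts i)) ∉ RI r
  | .eq _ x y, X => ∀ s ∈ X, (fun i => s (x i)) = fun i => s (y i)
  | .neq _ x y, X => ∀ s ∈ X, (fun i => s (x i)) ≠ fun i => s (y i)
  | .dep d xs, X => DI d M (X.rel xs)
  | .and φ ψ, X => tsat RI DI φ X ∧ tsat RI DI ψ X
  | .or φ ψ, X => ∃ Y Z, X = Y ∪ Z ∧ tsat RI DI φ Y ∧ tsat RI DI ψ Z
  | .ex v φ, X => ∃ H : (ℕ → M) → Set M, (∀ s ∈ X, (H s).Nonempty) ∧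
      tsat RI DI φ {s' | ∃ s ∈ X, ∃ m ∈ H s, s' = Function.update s v m}
  | .all v φ, X => tsat RI DI φ {s' | ∃ s ∈ X, ∃ m : M, s' = Function.update s v m}

/-- Tarski (single-assignment) semantics; dependency atoms are treated as
trivially true (they are only meaningful for first-order formulas). -/
def ssat {σ : Type} {ar : σ → ℕ} {δ : Type} {dar : δ → ℕ} {M : Type}
    (RI : ∀ r : σ, Set (Fin (ar r) → M)) :
    TForm σ ar δ dar → (ℕ → M) → Prop
  | .rel r ts, s => (fun i => s (ts i)) ∈ RI r
  | .nrel r ts, s => (fun i => s (ts i)) ∉ RI r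
  | .eq _ x y, s => (fun i => s (x i)) = fun i => s (y i)
  | .neq _ x y, s => (fun i => s (x i)) ≠ fun i => s (y i)
  | .dep _ _, _ => True
  | .and φ ψ, s => ssat RI φ s ∧ ssat RI ψ s
  | .or φ ψ, s => ssat RI φ s ∨ ssat RI ψ s
  | .ex v φ, s => ∃ m : M, ssat RI φ (Function.update s v m)
  | .all v φ, s => ∀ m : M, ssat RI φ (Function.update s v m)

/-- A formula is first-order if it contains no dependency atoms. -/
def TForm.isFO {σ : Type} {ar : σ → ℕ} {δ : Type} {dar : δ → ℕ} :
    TForm σ ar δ dar → Prop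
  | .dep _ _ => False
  | .and φ ψ => φ.isFO ∧ ψ.isFO
  | .or φ ψ => φ.isFO ∧ ψ.isFO
  | .ex _ φ => φ.isFO
  | .all _ φ => φ.isFO
  | _ => True

/-- Free variables of a formula. -/
def TForm.free {σ : Type} {ar : σ → ℕ} {δ : Type} {dar : δ → ℕ} :
    TForm σ ar δ dar → Set ℕ
  | .rel _ ts => Set.range ts
  | .nrel _ ts => Set.range ts
  | .eq _ x y => Set.range x ∪ Set.range y
  | .neq _ x y => Set.range x ∪ Set.range y
  | .dep _ xs => Set.range xs
  | .and φ ψ => φ.free ∪ ψ.free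
  | .or φ ψ => φ.free ∪ ψ.free
  | .ex v φ => φ.free \ {v}
  | .all v φ => φ.free \ {v}

/-- The flattening `φᶠ`: replace every dependency atom by the trivially true
atom `⊤` (here rendered as the empty-tuple equality). -/
def TForm.flatten {σ : Type} {ar : σ → ℕ} {δ : Type} {dar : δ → ℕ} :
    TForm σ ar δ dar → TForm σ ar δ dar
  | .dep _ _ => .eq 0 Fin.elim0 Fin.elim0
  | .and φ ψ => .and φ.flatten ψ.flatten
  | .or φ ψ => .or φ.flatten ψ.flatten
  | .ex v φ => .ex v φ.flatten
  | .all v φ => .all v φ.flatten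
  | φ => φ

/-- Negation normal form of the negation of a (first-order) formula. -/
def TForm.neg {σ : Type} {ar : σ → ℕ} {δ : Type} {dar : δ → ℕ} :
    TForm σ ar δ dar → TForm σ ar δ dar
  | .rel r ts => .nrel r ts
  | .nrel r ts => .rel r ts
  | .eq k x y => .neq k x y
  | .neq k x y => .eq k x y
  | .dep d xs => .dep d xs
  | .and φ ψ => .or φ.neg ψ.neg
  | .or φ ψ => .and φ.neg ψ.neg
  | .ex v φ => .all v φ.neg
  | .all v φ => .ex v φ.neg

/-- `(ψ ↾ θ) := (¬θ) ∨ (θ ∧ ψ)`. -/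
def TForm.restrict {σ : Type} {ar : σ → ℕ} {δ : Type} {dar : δ → ℕ}
    (ψ θ : TForm σ ar δ dar) : TForm σ ar δ dar :=
  .or θ.neg (.and θ ψ)

/-- A family of dependencies is upwards closed. -/
def UpClosed {δ : Type} {dar : δ → ℕ} (DI : DepFam δ dar) : Prop :=
  ∀ (d : δ) (M : Type) (R S : Set (Fin (dar d) → M)), R ⊆ S → DI d M R → DI d M S

/-- The constancy dependency of arity `n`. -/
def ConstD (n : ℕ) : ∀ M : Type, Set (Fin n → M) → Prop :=
  fun _ R => ∀ t ∈ R, ∀ t' ∈ R, t = t'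

/-!
The flattening `φᶠ` is flat: `M ⊨_Y φᶠ` holds iff every assignment of `Y` satisfies `φ` in
Tarski semantics (with dependency atoms read as true). So it suffices to lift `M ⊨_X φ` to
`M ⊨_Y φ` when `φ` holds classically at every point of `Y`. This goes by induction on `φ`:
the witnesses for `X` (the split of a disjunction, the choice function of an existential) are
enlarged by the assignments of `Y` that classically satisfy the relevant subformula, and a
dependency atom survives the enlargement of its team because it is upwards closed.
-/

section

variable {σ : Type} {ar : σ → ℕ} {δ : Type} {dar : δ → ℕ} {M : Type}
  (RI : ∀ r : σ, Set (Fin (ar r) → M)) (DI : DepFam δ dar)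

theorem Team.rel_mono {X Y : Team M} (hXY : X ⊆ Y) {k : ℕ} (xs : Fin k → ℕ) :
    X.rel xs ⊆ Y.rel xs := by
  rintro t ⟨s, hs, rfl⟩
  exact ⟨s, hXY hs, rfl⟩

theorem ssat_flatten (φ : TForm σ ar δ dar) (s : ℕ → M) :
    ssat RI φ.flatten s ↔ ssat RI φ s := by
  induction φ generalizing s <;> simp_all [TForm.flatten, ssat]

variable {RI DI}

theorem ssat_of_tsat {φ : TForm σ ar δ dar} {X : Team M} (h : tsat RI DI φ X) :
    ∀ s ∈ X, ssat RI φ s := by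
  induction φ generalizing X with
  | rel | nrel | eq | neq => exact h
  | dep => exact fun _ _ => trivial
  | and φ ψ ihφ ihψ => exact fun s hs => ⟨ihφ h.1 s hs, ihψ h.2 s hs⟩
  | or φ ψ ihφ ihψ =>
    obtain ⟨Y, Z, rfl, hY, hZ⟩ := h
    rintro s (hs | hs)
    · exact Or.inl (ihφ hY s hs)
    · exact Or.inr (ihψ hZ s hs)
  | ex v φ ih =>
    obtain ⟨H, hne, hsat⟩ := h
    intro s hs
    obtain ⟨m, hm⟩ := hne s hs
    exact ⟨m, ih hsat _ ⟨s, hs, m, hm, rfl⟩⟩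
  | all v φ ih => exact fun s hs m => ih h _ ⟨s, hs, m, rfl⟩

theorem tsat_flatten_of_ssat {φ : TForm σ ar δ dar} {X : Team M}
    (h : ∀ s ∈ X, ssat RI φ s) : tsat RI DI φ.flatten X := by
  induction φ generalizing X with
  | rel | nrel | eq | neq => exact h
  | dep => exact fun _ _ => funext fun i => i.elim0
  | and φ ψ ihφ ihψ => exact ⟨ihφ fun s hs => (h s hs).1, ihψ fun s hs => (h s hs).2⟩
  | or φ ψ ihφ ihψ =>
    refine ⟨{s ∈ X | ssat RI φ s}, {s ∈ X | ssat RI ψ s}, ?_,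
      ihφ fun s hs => hs.2, ihψ fun s hs => hs.2⟩
    rw [← Set.sep_or]
    exact (Set.sep_eq_self_iff_mem_true.mpr h).symm
  | ex v φ ih =>
    refine ⟨fun s => {m | ssat RI φ (Function.update s v m)}, h, ih ?_⟩
    rintro _ ⟨s, -, m, hm, rfl⟩
    exact hm
  | all v φ ih =>
    apply ih
    rintro _ ⟨s, hs, m, rfl⟩
    exact h s hs m

theorem tsat_flatten_iff {φ : TForm σ ar δ dar} {X : Team M} :
    tsat RI DI φ.flatten X ↔ ∀ s ∈ X, ssat RI φ s :=
  ⟨fun h s hs => (ssat_flatten RI φ s).mp (ssat_of_tsat h s hs), tsat_flatten_of_ssat⟩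

theorem tsat_of_subset_of_ssat (hup : UpClosed DI) {φ : TForm σ ar δ dar} {X Y : Team M}
    (hXY : X ⊆ Y) (hX : tsat RI DI φ X) (hY : ∀ s ∈ Y, ssat RI φ s) : tsat RI DI φ Y := by
  induction φ generalizing X Y with
  | rel | nrel | eq | neq => exact hY
  | dep d xs => exact hup d M _ _ (Team.rel_mono hXY xs) hX
  | and φ ψ ihφ ihψ =>
    exact ⟨ihφ hXY hX.1 fun s hs => (hY s hs).1, ihψ hXY hX.2 fun s hs => (hY s hs).2⟩
  | or φ ψ ihφ ihψ =>
    obtain ⟨X₁, X₂, rfl, hX₁, hX₂⟩ := hX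
    refine ⟨X₁ ∪ {s ∈ Y | ssat RI φ s}, X₂ ∪ {s ∈ Y | ssat RI ψ s}, ?_,
      ihφ Set.subset_union_left hX₁ ?_, ihψ Set.subset_union_left hX₂ ?_⟩
    · have hY' : ∀ s ∈ Y, ssat RI φ s ∨ ssat RI ψ s := hY
      rw [Set.union_union_union_comm, ← Set.sep_or, Set.sep_eq_self_iff_mem_true.mpr hY',
        Set.union_eq_right.mpr hXY]
    · rintro s (hs | hs)
      exacts [ssat_of_tsat hX₁ s hs, hs.2]
    · rintro s (hs | hs)
      exacts [ssat_of_tsat hX₂ s hs, hs.2]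
  | ex v φ ih =>
    obtain ⟨H, hne, hsat⟩ := hX
    refine ⟨fun s => {m | s ∈ X ∧ m ∈ H s} ∪ {m | ssat RI φ (Function.update s v m)},
      fun s hs => (hY s hs).imp fun _ => Or.inr, ih ?_ hsat ?_⟩
    · rintro _ ⟨s, hs, m, hm, rfl⟩
      exact ⟨s, hXY hs, m, Or.inl ⟨hs, hm⟩, rfl⟩
    · rintro _ ⟨s, -, m, ⟨hs, hm⟩ | hm, rfl⟩
      exacts [ssat_of_tsat hsat _ ⟨s, hs, m, hm, rfl⟩, hm]
  | all v φ ih =>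
    refine ih ?_ hX ?_
    · rintro _ ⟨s, hs, m, rfl⟩
      exact ⟨s, hXY hs, m, rfl⟩
    · rintro _ ⟨s, hs, m, rfl⟩
      exact hY s hs m

end

theorem upflat {σ : Type} {ar : σ → ℕ} {δ : Type} {dar : δ → ℕ} {M : Type}
    (RI : ∀ r : σ, Set (Fin (ar r) → M)) (DI : DepFam δ dar) (hup : UpClosed DI)
    (φ : TForm σ ar δ dar) (X Y : Team M) (hXY : X ⊆ Y)
    (hX : tsat RI DI φ X) (hY : tsat RI DI φ.flatten Y) :
    tsat RI DI φ Y :=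
  tsat_of_subset_of_ssat hup hXY hX (tsat_flatten_iff.mp hY)
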